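/- arXiv:2201.12615 — 8 statements merged into one kernel-verified Lean document; each statement's English description precedes it below -/
import Mathlib

section
/- Let θ > 0 and Z > 0. Then F(Z) = Z if and only if (Z − 1)(AZ⁴ + BZ³ + CZ² + BZ + A) = 0, where A = θ⁴(1+θ+θ²)², B = −1 − 2θ³ + 5θ⁴ + 10θ⁵ + 12θ⁶ + 10θ⁷ + 5θ⁸ − 2θ⁹ − θ¹², and C = −1 − 2θ² − 4θ³ + 7θ⁴ + 16θ⁵ + 22θ⁶ + 16θ⁷ + 7θ⁸ − 4θ⁹ − 2θ¹⁰ − θ¹². -/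
/-- The function F from the paper (eq. (Fixed-1a)). -/
noncomputable def F (θ Z : ℝ) : ℝ :=
  ((Z^2 + θ^2 + 2*Z*θ^2 + θ^3 + 2*Z*θ^3 + Z^2*θ^3 + θ^4 + 2*Z*θ^4 + Z^2*θ^6) /
   (1 + 2*Z*θ^2 + Z^2*θ^2 + θ^3 + 2*Z*θ^3 + Z^2*θ^3 + 2*Z*θ^4 + Z^2*θ^4 + θ^6))^2

/-- Coefficient A. -/
def A (θ : ℝ) : ℝ := θ^4 * (1 + θ + θ^2)^2
/-- Coefficient B. -/
def B (θ : ℝ) : ℝ :=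
  -1 - 2*θ^3 + 5*θ^4 + 10*θ^5 + 12*θ^6 + 10*θ^7 + 5*θ^8 - 2*θ^9 - θ^12
/-- Coefficient C. -/
def C (θ : ℝ) : ℝ :=
  -1 - 2*θ^2 - 4*θ^3 + 7*θ^4 + 16*θ^5 + 22*θ^6 + 16*θ^7 + 7*θ^8 - 4*θ^9 - 2*θ^10 - θ^12

/-- F(Z) = Z iff (Z−1)(AZ⁴+BZ³+CZ²+BZ+A) = 0. -/
theorem stmt_2 (θ Z : ℝ) (hθ : 0 < θ) (hZ : 0 < Z) :
    F θ Z = Z ↔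
    (Z - 1) * (A θ * Z^4 + B θ * Z^3 + C θ * Z^2 + B θ * Z + A θ) = 0 := by
  have hD : (0:ℝ) < 1 + 2*Z*θ^2 + Z^2*θ^2 + θ^3 + 2*Z*θ^3 + Z^2*θ^3 + 2*Z*θ^4 + Z^2*θ^4 + θ^6 := by
    positivity
  unfold F A B C
  rw [div_pow, div_eq_iff (by positivity)]
  constructor
  · intro h
    linear_combination -h
  · intro h
    linear_combination -h
end

section
/- Let ρ_crt be the unique root of 3ρ³ − 16ρ − 4 in (2, ∞), and let θ₁ = (ρ_crt − √(ρ_crt² − 4))/2 and θ₂ = (ρ_crt + √(ρ_crt² − 4))/2. If θ ∈ (0, θ₁) ∪ (θ₂, ∞), then the equation F(Z) = Z has at least three distinct solutions Z > 0; in particular Z = 1 is a solution and there exists a solution Z* > 1 such that 1/Z* is also a solution. (Phase transition: non-uniqueness of translation-invariant splitting Gibbs measures for the mixed spin-(1,1/2) Ising model on the order-2 Cayley tree.) -/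
private lemma Df_pos (θ Z : ℝ) (hθ : 0 < θ) (hZ : 0 < Z) :
    0 < 1 + 2*Z*θ^2 + Z^2*θ^2 + θ^3 + 2*Z*θ^3 + Z^2*θ^3 + 2*Z*θ^4 + Z^2*θ^4 + θ^6 := by
  have h2 := pow_pos hθ 2
  have h3 := pow_pos hθ 3
  have h4 := pow_pos hθ 4
  have h6 := pow_pos hθ 6
  have hZ2 := pow_pos hZ 2
  nlinarith [mul_pos hZ h2, mul_pos hZ2 h2, mul_pos hZ h3, mul_pos hZ2 h3,
    mul_pos hZ h4, mul_pos hZ2 h4]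

private lemma Nf_pos (θ Z : ℝ) (hθ : 0 < θ) (hZ : 0 < Z) :
    0 < Z^2 + θ^2 + 2*Z*θ^2 + θ^3 + 2*Z*θ^3 + Z^2*θ^3 + θ^4 + 2*Z*θ^4 + Z^2*θ^6 := by
  have h2 := pow_pos hθ 2
  have h3 := pow_pos hθ 3
  have h4 := pow_pos hθ 4
  have h6 := pow_pos hθ 6
  have hZ2 := pow_pos hZ 2
  nlinarith [mul_pos hZ h2, mul_pos hZ h3, mul_pos hZ2 h3, mul_pos hZ h4,
    mul_pos hZ2 h6]

set_option maxHeartbeats 1000000 in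
/-- for θ ∈ (0, θ₁) ∪ (θ₂, ∞), the fixed-point equation F(Z) = Z has at
least three distinct positive solutions: Z = 1, some Z* > 1, and 1/Z*. -/
theorem stmt_9 (ρc : ℝ) (hρc : 2 < ρc) (hρroot : 3*ρc^3 - 16*ρc - 4 = 0)
    (θ₁ θ₂ : ℝ) (hθ₁ : θ₁ = (ρc - Real.sqrt (ρc^2 - 4)) / 2)
    (hθ₂ : θ₂ = (ρc + Real.sqrt (ρc^2 - 4)) / 2)
    (θ : ℝ) (hθ : 0 < θ) (hrange : θ < θ₁ ∨ θ₂ < θ) :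
    F θ 1 = 1 ∧ ∃ Z : ℝ, 1 < Z ∧ F θ Z = Z ∧ F θ (1/Z) = 1/Z := by
  constructor
  · -- F θ 1 = 1
    have hD := Df_pos θ 1 hθ one_pos
    rw [F]
    rw [show (1:ℝ)^2 + θ^2 + 2*1*θ^2 + θ^3 + 2*1*θ^3 + 1^2*θ^3 + θ^4 + 2*1*θ^4 + 1^2*θ^6
        = 1 + 2*1*θ^2 + 1^2*θ^2 + θ^3 + 2*1*θ^3 + 1^2*θ^3 + 2*1*θ^4 + 1^2*θ^4 + θ^6 from by ring]
    rw [div_self hD.ne', one_pow]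
  · -- the analysis
    obtain ⟨s, hs⟩ : ∃ x:ℝ, x = Real.sqrt (ρc^2 - 4) := ⟨_, rfl⟩
    rw [← hs] at hθ₁ hθ₂
    have hs2 : s^2 = ρc^2 - 4 := by rw [hs]; exact Real.sq_sqrt (by nlinarith)
    have hs0 : 0 ≤ s := hs ▸ Real.sqrt_nonneg _
    -- key inequality: θ² + 1 > ρc θ
    have hu : 0 < θ^2 + 1 - ρc*θ := by
      rcases hrange with h | h
      · rw [hθ₁] at h
        have h1 : 0 < ρc - 2*θ - s := by linarith
        have h2 : 0 < ρc - 2*θ + s := by linarith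
        nlinarith [mul_pos h1 h2]
      · rw [hθ₂] at h
        have h1 : 0 < 2*θ - ρc - s := by linarith
        have h2 : 0 < 2*θ - ρc + s := by linarith
        nlinarith [mul_pos h1 h2]
    -- G > 0 where G = θ³ (3ρ³ - 16ρ - 4), ρ = θ + 1/θ
    have hV : 0 < 3*(θ^2+1)^2 + 3*(θ^2+1)*θ*ρc + 3*θ^2*ρc^2 - 16*θ^2 := by
      nlinarith [sq_nonneg (θ^2-1),
        mul_pos (mul_pos (show (0:ℝ) < θ^2+1 by positivity) hθ) (show (0:ℝ) < ρc by linarith),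
        mul_pos (mul_pos hθ hθ) (mul_pos (show (0:ℝ) < ρc-2 by linarith)
          (show (0:ℝ) < ρc+2 by linarith))]
    have hG : 0 < 3*θ^6 - 7*θ^4 - 4*θ^3 - 7*θ^2 + 3 := by
      have hid : 3*θ^6 - 7*θ^4 - 4*θ^3 - 7*θ^2 + 3
          = (θ^2 + 1 - ρc*θ)*(3*(θ^2+1)^2 + 3*(θ^2+1)*θ*ρc + 3*θ^2*ρc^2 - 16*θ^2)
            + θ^3*(3*ρc^3 - 16*ρc - 4) := by ring
      rw [hid, hρroot, mul_zero, add_zero]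
      exact mul_pos hu hV
    -- the quartic q (quotient of N² - Z D² by (Z-1))
    obtain ⟨b, hb⟩ : ∃ x:ℝ, x = 1 + 2*θ^3 - 5*θ^4 - 10*θ^5 - 12*θ^6 - 10*θ^7 - 5*θ^8 + 2*θ^9 + θ^12 := ⟨_, rfl⟩
    obtain ⟨c, hc⟩ : ∃ x:ℝ, x = 1 + 2*θ^2 + 4*θ^3 - 7*θ^4 - 16*θ^5 - 22*θ^6 - 16*θ^7 - 7*θ^8 + 4*θ^9 + 2*θ^10 + θ^12 := ⟨_, rfl⟩
    obtain ⟨A, hA⟩ : ∃ x:ℝ, x = (θ^2 + θ^3 + θ^4)^2 := ⟨_, rfl⟩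
    have hA0 : 0 < A := by rw [hA]; positivity
    obtain ⟨q, hqdef⟩ : ∃ f : ℝ → ℝ, f = fun Z => -A*Z^4 + b*Z^3 + c*Z^2 + b*Z + -A := ⟨_, rfl⟩
    have hq1 : 0 < q 1 := by
      have : q 1 = (3*θ^6 - 7*θ^4 - 4*θ^3 - 7*θ^2 + 3)*(θ^6 + 3*θ^4 + 4*θ^3 + 3*θ^2 + 1) := by
        simp only [hqdef, hb, hc, hA]; ring
      rw [this]
      exact mul_pos hG (by positivity)
    -- a point where q is negative
    obtain ⟨Z₀, hZ₀⟩ : ∃ x:ℝ, x = (2 * |b| + |c| + A)/A + 2 := ⟨_, rfl⟩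
    have hZ₀2 : (2:ℝ) ≤ Z₀ := by
      have h0 : 0 ≤ (2 * |b| + |c| + A)/A := by positivity
      rw [hZ₀]; linarith
    have hZ₀1 : (1:ℝ) ≤ Z₀ := by linarith
    have hZ₀pos : (0:ℝ) < Z₀ := by linarith
    have hAZ : A * Z₀ = 2 * |b| + |c| + 3*A := by
      rw [hZ₀]; field_simp; ring
    have hqZ₀ : q Z₀ < 0 := by
      have hZ3 : (0:ℝ) ≤ Z₀^3 := by positivity
      have hZ23 : Z₀^2 ≤ Z₀^3 := pow_le_pow_right₀ hZ₀1 (by norm_num)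
      have hZ13 : Z₀ ≤ Z₀^3 := by
        calc Z₀ = Z₀^1 := (pow_one Z₀).symm
        _ ≤ Z₀^3 := pow_le_pow_right₀ hZ₀1 (by norm_num)
      have hb1 : b*Z₀^3 ≤ |b| * Z₀^3 := mul_le_mul_of_nonneg_right (le_abs_self b) hZ3
      have hc1 : c*Z₀^2 ≤ |c| * Z₀^3 := by
        calc c*Z₀^2 ≤ |c| * Z₀^2 := mul_le_mul_of_nonneg_right (le_abs_self c) (by positivity)
        _ ≤ |c| * Z₀^3 := mul_le_mul_of_nonneg_left hZ23 (abs_nonneg c)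
      have hb2 : b*Z₀ ≤ |b| * Z₀^3 := by
        calc b*Z₀ ≤ |b| * Z₀ := mul_le_mul_of_nonneg_right (le_abs_self b) hZ₀pos.le
        _ ≤ |b| * Z₀^3 := mul_le_mul_of_nonneg_left hZ13 (abs_nonneg b)
      have ha2 : -A ≤ A*Z₀^3 := by nlinarith
      have hkey : (A*Z₀)*Z₀^3 = (2 * |b| + |c| + 3*A)*Z₀^3 := by rw [hAZ]
      have hq4 : A*Z₀^4 = (A*Z₀)*Z₀^3 := by ring
      have hfin : q Z₀ ≤ -(2*A)*Z₀^3 := by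
        simp only [hqdef]
        linarith [hb1, hc1, hb2, ha2, hkey, hq4]
      have : 0 < 2*A*Z₀^3 := by positivity
      linarith
    -- IVT
    have hcont : ContinuousOn q (Set.Icc 1 Z₀) := by
      apply Continuous.continuousOn
      simp only [hqdef]
      fun_prop
    have h0mem : (0:ℝ) ∈ Set.Icc (q Z₀) (q 1) := ⟨hqZ₀.le, hq1.le⟩
    obtain ⟨Z, hZmem, hqZ⟩ := intermediate_value_Icc' hZ₀1 hcont h0mem
    have hZ1 : 1 < Z := by
      rcases lt_or_eq_of_le hZmem.1 with h | h
      · exact h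
      · exfalso; rw [← h] at hqZ; rw [hqZ] at hq1; exact lt_irrefl 0 hq1
    have hZpos : 0 < Z := by linarith
    -- fixed point equation
    have hD := Df_pos θ Z hθ hZpos
    have hN := Nf_pos θ Z hθ hZpos
    have hNN : (Z^2 + θ^2 + 2*Z*θ^2 + θ^3 + 2*Z*θ^3 + Z^2*θ^3 + θ^4 + 2*Z*θ^4 + Z^2*θ^6)^2
        = Z * (1 + 2*Z*θ^2 + Z^2*θ^2 + θ^3 + 2*Z*θ^3 + Z^2*θ^3 + 2*Z*θ^4 + Z^2*θ^4 + θ^6)^2 := by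
      have h1 : (Z^2 + θ^2 + 2*Z*θ^2 + θ^3 + 2*Z*θ^3 + Z^2*θ^3 + θ^4 + 2*Z*θ^4 + Z^2*θ^6)^2
          - Z * (1 + 2*Z*θ^2 + Z^2*θ^2 + θ^3 + 2*Z*θ^3 + Z^2*θ^3 + 2*Z*θ^4 + Z^2*θ^4 + θ^6)^2
          = (Z - 1) * q Z := by
        simp only [hqdef, hb, hc, hA]; ring
      rw [hqZ, mul_zero] at h1
      linarith
    refine ⟨Z, hZ1, ?_, ?_⟩
    · rw [F, div_pow, hNN, mul_div_assoc, div_self (by positivity), mul_one]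
    · rw [F, div_pow]
      rw [div_eq_div_iff (by positivity) (by positivity : (Z:ℝ) ≠ 0)]
      have e1 : ((1/Z)^2 + θ^2 + 2*(1/Z)*θ^2 + θ^3 + 2*(1/Z)*θ^3 + (1/Z)^2*θ^3 + θ^4 + 2*(1/Z)*θ^4 + (1/Z)^2*θ^6)
          = (1 + 2*Z*θ^2 + Z^2*θ^2 + θ^3 + 2*Z*θ^3 + Z^2*θ^3 + 2*Z*θ^4 + Z^2*θ^4 + θ^6)/Z^2 := by
        field_simp; ring
      have e2 : (1 + 2*(1/Z)*θ^2 + (1/Z)^2*θ^2 + θ^3 + 2*(1/Z)*θ^3 + (1/Z)^2*θ^3 + 2*(1/Z)*θ^4 + (1/Z)^2*θ^4 + θ^6)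
          = (Z^2 + θ^2 + 2*Z*θ^2 + θ^3 + 2*Z*θ^3 + Z^2*θ^3 + θ^4 + 2*Z*θ^4 + Z^2*θ^6)/Z^2 := by
        field_simp; ring
      rw [e1, e2, div_pow, div_pow, div_mul_eq_mul_div, one_mul,
        div_eq_div_iff (pow_ne_zero 2 (pow_ne_zero 2 hZpos.ne')) (pow_ne_zero 2 (pow_ne_zero 2 hZpos.ne'))]
      rw [hNN]; ring
end

section
/- Let ρ_crt be the unique root of 3ρ³ − 16ρ − 4 in (2, ∞), and let θ₁ = (ρ_crt − √(ρ_crt² − 4))/2 and θ₂ = (ρ_crt + √(ρ_crt² − 4))/2. If θ₁ < θ < θ₂, then Z = 1 is the unique positive solution of the equation F(Z) = Z. -/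
lemma aux_p_neg (s ρ : ℝ) (hs : 2 ≤ s) (hsρ : s < ρ) (hρ : ρ < 5/2) :
    s^6 - 6*s^4 + 2*s^3 - 24*s - 8 < 0 := by
  have hu : (0:ℝ) ≤ s - 2 := by linarith
  have hw : (0:ℝ) ≤ 5/2 - s := by linarith
  nlinarith [mul_nonneg hu hw, mul_nonneg (mul_nonneg hu hu) hw,
    mul_nonneg (mul_nonneg (mul_nonneg hu hu) hu) hw,
    mul_nonneg (mul_nonneg (mul_nonneg (mul_nonneg hu hu) hu) hu) hw,
    mul_nonneg (mul_nonneg (mul_nonneg (mul_nonneg (mul_nonneg hu hu) hu) hu) hu) hw,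
    mul_nonneg hu hu, mul_nonneg (mul_nonneg hu hu) hu]

lemma aux_g_neg (s ρ : ℝ) (hs : 2 ≤ s) (hsρ : s < ρ)
    (hr : 3*ρ^3 - 16*ρ - 4 = 0) : 3*s^3 - 16*s - 4 < 0 := by
  nlinarith [mul_pos (sub_pos.2 hsρ) (show (0:ℝ) < 3*(ρ^2+ρ*s+s^2)-16 by nlinarith)]

/-- for θ₁ < θ < θ₂, Z = 1 is the unique positive solution of F(Z) = Z. -/
theorem stmt_10 (ρc : ℝ) (hρc : 2 < ρc) (hρroot : 3*ρc^3 - 16*ρc - 4 = 0)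
    (θ₁ θ₂ : ℝ) (hθ₁ : θ₁ = (ρc - Real.sqrt (ρc^2 - 4)) / 2)
    (hθ₂ : θ₂ = (ρc + Real.sqrt (ρc^2 - 4)) / 2)
    (θ : ℝ) (hrange : θ₁ < θ ∧ θ < θ₂) :
    ∀ Z : ℝ, 0 < Z → F θ Z = Z → Z = 1 := by
  obtain ⟨h1, h2⟩ := hrange
  have hd : (0:ℝ) ≤ ρc^2 - 4 := by nlinarith
  have hsq : Real.sqrt (ρc^2 - 4) ^ 2 = ρc^2 - 4 := Real.sq_sqrt hd
  have hsnn : 0 ≤ Real.sqrt (ρc^2 - 4) := Real.sqrt_nonneg _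
  have hslt : Real.sqrt (ρc^2 - 4) < ρc := by nlinarith
  have hθpos : 0 < θ := by
    have : 0 < θ₁ := by rw [hθ₁]; linarith
    linarith
  have hρlt : ρc < 5/2 := by nlinarith [sq_nonneg (ρc - 5/2)]
  -- key range inequality
  have hkey : θ^2 + 1 < ρc * θ := by
    have hp1 : 0 < θ - θ₁ := by linarith
    have hp2 : 0 < θ₂ - θ := by linarith
    have := mul_pos hp1 hp2
    rw [hθ₁, hθ₂] at this
    nlinarith [this]
  set s : ℝ := (θ^2 + 1) / θ with hs_def
  have hθne : θ ≠ 0 := ne_of_gt hθpos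
  have hs2 : 2 ≤ s := by
    rw [hs_def, le_div_iff₀ hθpos]
    nlinarith [sq_nonneg (θ - 1)]
  have hsρ : s < ρc := by
    rw [hs_def, div_lt_iff₀ hθpos]
    linarith
  have hθ6 : (0:ℝ) < θ^6 := by positivity
  -- 4A + B < 0
  have hAB : 1 + 2*θ^3 - 9*θ^4 - 18*θ^5 - 24*θ^6 - 18*θ^7 - 9*θ^8 + 2*θ^9 + θ^12 < 0 := by
    have hp := aux_p_neg s ρc hs2 hsρ hρlt
    have hid : θ^6 * (s^6 - 6*s^4 + 2*s^3 - 24*s - 8)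
        = 1 + 2*θ^3 - 9*θ^4 - 18*θ^5 - 24*θ^6 - 18*θ^7 - 9*θ^8 + 2*θ^9 + θ^12 := by
      rw [hs_def]; field_simp; ring
    nlinarith [mul_pos hθ6 (neg_pos.2 hp)]
  -- Q(1) < 0
  have hQ1 : 3 + 2*θ^2 + 8*θ^3 - 19*θ^4 - 40*θ^5 - 52*θ^6 - 40*θ^7 - 19*θ^8
      + 8*θ^9 + 2*θ^10 + 3*θ^12 < 0 := by
    have hg := aux_g_neg s ρc hs2 hsρ hρroot
    have hs3 : 0 < s^3 + 4 := by positivity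
    have hid : θ^6 * ((s^3 + 4) * (3*s^3 - 16*s - 4))
        = 3 + 2*θ^2 + 8*θ^3 - 19*θ^4 - 40*θ^5 - 52*θ^6 - 40*θ^7 - 19*θ^8
          + 8*θ^9 + 2*θ^10 + 3*θ^12 := by
      rw [hs_def]; field_simp; ring
    nlinarith [mul_pos hθ6 (mul_pos hs3 (neg_pos.2 hg))]
  -- A < 0
  have hA : -(θ^4 + 2*θ^5 + 3*θ^6 + 2*θ^7 + θ^8) < 0 := by
    have : (0:ℝ) < θ^4 + 2*θ^5 + 3*θ^6 + 2*θ^7 + θ^8 := by positivity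
    linarith
  intro Z hZ hF
  set N : ℝ := Z^2 + θ^2 + 2*Z*θ^2 + θ^3 + 2*Z*θ^3 + Z^2*θ^3 + θ^4 + 2*Z*θ^4 + Z^2*θ^6
    with hN_def
  set D : ℝ := 1 + 2*Z*θ^2 + Z^2*θ^2 + θ^3 + 2*Z*θ^3 + Z^2*θ^3 + 2*Z*θ^4 + Z^2*θ^4 + θ^6
    with hD_def
  have hDpos : 0 < D := by rw [hD_def]; positivity
  have hND : N^2 = Z * D^2 := by
    have : (N / D)^2 = Z := hF
    field_simp at this
    linarith [this]
  -- factorization: N² - Z D² = (Z-1) Q(Z)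
  set A : ℝ := -(θ^4 + 2*θ^5 + 3*θ^6 + 2*θ^7 + θ^8) with hA_def
  set B : ℝ := 1 + 2*θ^3 - 5*θ^4 - 10*θ^5 - 12*θ^6 - 10*θ^7 - 5*θ^8 + 2*θ^9 + θ^12 with hB_def
  set C : ℝ := 1 + 2*θ^2 + 4*θ^3 - 7*θ^4 - 16*θ^5 - 22*θ^6 - 16*θ^7 - 7*θ^8
      + 4*θ^9 + 2*θ^10 + θ^12 with hC_def
  set Q : ℝ := A*(Z^4+1) + B*(Z*(Z^2+1)) + C*Z^2 with hQ_def
  have hfac : N^2 - Z * D^2 = (Z - 1) * Q := by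
    rw [hN_def, hD_def, hQ_def, hA_def, hB_def, hC_def]; ring
  have hQneg : Q < 0 := by
    have hdecomp : Q = A*(Z-1)^4 + (4*A+B)*(Z*(Z-1)^2)
        + (2*A+2*B+C)*Z^2 := by rw [hQ_def]; ring
    have h4AB : 4*A + B < 0 := by rw [hA_def, hB_def]; linarith [hAB]
    have hQ1' : 2*A + 2*B + C < 0 := by rw [hA_def, hB_def, hC_def]; linarith [hQ1]
    have t1 : A*(Z-1)^4 ≤ 0 := mul_nonpos_of_nonpos_of_nonneg hA.le (by positivity)
    have t2 : (4*A+B)*(Z*(Z-1)^2) ≤ 0 :=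
      mul_nonpos_of_nonpos_of_nonneg h4AB.le (by positivity)
    have t3 : (2*A+2*B+C)*Z^2 < 0 := mul_neg_of_neg_of_pos hQ1' (by positivity)
    rw [hdecomp]; linarith
  have hzero : (Z - 1) * Q = 0 := by rw [← hfac]; linarith [hND]
  rcases mul_eq_zero.1 hzero with h | h
  · linarith
  · exact absurd h (ne_of_lt hQneg)
end

section
/- Let θ > 0, θ ≠ 1, let D = 1 + 3θ² + 4θ³ + 3θ⁴ + θ⁶, and let J_F be the 3×3 real matrix with rows (0, 0, −(θ² − θ⁻²)/4), (0, 0, (θ² − θ⁻²)/4), (−8θ²(θ² − 1)/D, 8θ²(θ² − 1)/D, 0). Then the eigenvalues of J_F are exactly 0, λ and −λ, where λ² = 4(θ² − 1)²(θ² + 1)/D, i.e. λ = 2√(1 − θ² − θ⁴ + θ⁶)/√D. -/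
/-- the eigenvalues of the Jacobian at the disordered fixed point are
exactly 0, λ and −λ with λ = 2√(1 − θ² − θ⁴ + θ⁶)/√D and λ² = 4(θ² − 1)²(θ² + 1)/D. -/
theorem stmt_11 (θ : ℝ) (hθ : 0 < θ) (hθ1 : θ ≠ 1)
    (D : ℝ) (hD : D = 1 + 3*θ^2 + 4*θ^3 + 3*θ^4 + θ^6)
    (J_F : Matrix (Fin 3) (Fin 3) ℝ)
    (hJ : J_F = !![0, 0, -(θ^2 - 1/θ^2)/4;
                   0, 0, (θ^2 - 1/θ^2)/4;
                   -8*θ^2*(θ^2 - 1)/D, 8*θ^2*(θ^2 - 1)/D, 0])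
    (lam : ℝ) (hlam : lam = 2 * Real.sqrt (1 - θ^2 - θ^4 + θ^6) / Real.sqrt D) :
    lam^2 = 4*(θ^2 - 1)^2*(θ^2 + 1)/D ∧
    spectrum ℝ J_F = {0, lam, -lam} := by
  have hθ0 : θ ≠ 0 := ne_of_gt hθ
  have hDpos : 0 < D := by rw [hD]; positivity
  have hD0 : D ≠ 0 := ne_of_gt hDpos
  have hA : 1 - θ^2 - θ^4 + θ^6 = (1-θ^2)^2*(1+θ^2) := by ring
  have hAnn : 0 ≤ 1 - θ^2 - θ^4 + θ^6 := by rw [hA]; positivity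
  have hlam2 : lam^2 = 4*(θ^2 - 1)^2*(θ^2 + 1)/D := by
    rw [hlam, div_pow, mul_pow, Real.sq_sqrt hAnn, Real.sq_sqrt hDpos.le, hA]; ring
  refine ⟨hlam2, ?_⟩
  ext μ
  simp only [spectrum.mem_iff, Matrix.isUnit_iff_isUnit_det, isUnit_iff_ne_zero, not_not]
  have hdet : (algebraMap ℝ (Matrix (Fin 3) (Fin 3) ℝ) μ - J_F).det
      = μ * (μ - lam) * (μ + lam) := by
    have key : μ * (μ - lam) * (μ + lam) = μ^3 - lam^2 * μ := by ring
    rw [key, hlam2, hJ]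
    simp [Matrix.det_fin_three, Matrix.algebraMap_matrix_apply]
    field_simp
    ring
  rw [hdet]
  simp only [Set.mem_insert_iff, Set.mem_singleton_iff, mul_eq_zero]
  constructor
  · rintro ((h | h) | h)
    · exact Or.inl h
    · exact Or.inr (Or.inl (by linarith))
    · exact Or.inr (Or.inr (by linarith))
  · rintro (h | h | h) <;> subst h <;> simp
end

section
/- Let θ > 0 and let ρ_crt, θ₁, θ₂ be as defined. Then 4(θ² − 1)²(θ² + 1) < 1 + 3θ² + 4θ³ + 3θ⁴ + θ⁶ if and only if θ₁ < θ < θ₂. (Thus the modulus of the nonzero eigenvalues of the Jacobian at the disordered fixed point is < 1 exactly on the interval (θ₁, θ₂).) -/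
/-- 4(θ² − 1)²(θ² + 1) < 1 + 3θ² + 4θ³ + 3θ⁴ + θ⁶ iff θ₁ < θ < θ₂. -/
theorem stmt_12 (ρc : ℝ) (hρc : 2 < ρc) (hρroot : 3*ρc^3 - 16*ρc - 4 = 0)
    (θ₁ θ₂ : ℝ) (hθ₁ : θ₁ = (ρc - Real.sqrt (ρc^2 - 4)) / 2)
    (hθ₂ : θ₂ = (ρc + Real.sqrt (ρc^2 - 4)) / 2)
    (θ : ℝ) (hθ : 0 < θ) :
    4*(θ^2 - 1)^2*(θ^2 + 1) < 1 + 3*θ^2 + 4*θ^3 + 3*θ^4 + θ^6 ↔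
      θ₁ < θ ∧ θ < θ₂ := by
  have hD : (0:ℝ) ≤ ρc^2 - 4 := by nlinarith
  have hs : Real.sqrt (ρc^2 - 4) ^ 2 = ρc^2 - 4 := Real.sq_sqrt hD
  have hsnn : 0 ≤ Real.sqrt (ρc^2 - 4) := Real.sqrt_nonneg _
  have hQ : 0 < 3*θ^4+3*ρc*θ^3+(3*ρc^2-10)*θ^2+3*ρc*θ+3 := by nlinarith [sq_nonneg θ, sq_nonneg (θ^2), mul_pos hθ (mul_pos hθ hθ)]
  have factor : 1 + 3*θ^2 + 4*θ^3 + 3*θ^4 + θ^6 - 4*(θ^2 - 1)^2*(θ^2 + 1)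
      = (ρc*θ - θ^2 - 1)*(3*θ^4+3*ρc*θ^3+(3*ρc^2-10)*θ^2+3*ρc*θ+3) := by
    linear_combination (-θ^3) * hρroot
  constructor
  · intro h
    have hneg : θ^2 - ρc*θ + 1 < 0 := by nlinarith
    subst hθ₁ hθ₂
    constructor <;> nlinarith
  · rintro ⟨h1, h2⟩
    subst hθ₁ hθ₂
    have hneg : θ^2 - ρc*θ + 1 < 0 := by nlinarith
    nlinarith
end

section
/- Let θ > 0, Z = 1 and X = Y = ((1 + θ²)/(2θ))². Let P be the 3×2 matrix with rows (θ²Z/(1+θ²Z), 1/(1+θ²Z)), (Z/(1+Z), 1/(1+Z)), (Z/(θ²+Z), θ²/(θ²+Z)), and let Q be the 2×3 matrix with rows (θ²X/(θ²X+θ+Y), θ/(θ²X+θ+Y), Y/(θ²X+θ+Y)), (X/(X+θ+θ²Y), θ/(X+θ+θ²Y), θ²Y/(X+θ+θ²Y)). Then P·Q = H, where H is the matrix (1/D)·[[(1+θ²)(1+θ⁴), 4θ³, 2θ²(1+θ²)], [(1+θ²)³/2, 4θ³, (1+θ²)³/2], [2θ²(1+θ²), 4θ³, (1+θ²)(1+θ⁴)]]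 with D = 1 + 3θ² + 4θ³ + 3θ⁴ + θ⁶. -/
set_option maxHeartbeats 1000000


/-- at the disordered fixed point (Z = 1, X = Y = ((1+θ²)/(2θ))²) the
product of the transition matrices P and Q equals the matrix H. -/
theorem stmt_13 (θ : ℝ) (hθ : 0 < θ)
    (X Y Z : ℝ) (hZ : Z = 1) (hX : X = ((1 + θ^2) / (2*θ))^2) (hY : Y = X)
    (P : Matrix (Fin 3) (Fin 2) ℝ)
    (hP : P = !![θ^2*Z/(1 + θ^2*Z), 1/(1 + θ^2*Z);
                 Z/(1 + Z), 1/(1 + Z);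
                 Z/(θ^2 + Z), θ^2/(θ^2 + Z)])
    (Q : Matrix (Fin 2) (Fin 3) ℝ)
    (hQ : Q = !![θ^2*X/(θ^2*X + θ + Y), θ/(θ^2*X + θ + Y), Y/(θ^2*X + θ + Y);
                 X/(X + θ + θ^2*Y), θ/(X + θ + θ^2*Y), θ^2*Y/(X + θ + θ^2*Y)])
    (D : ℝ) (hD : D = 1 + 3*θ^2 + 4*θ^3 + 3*θ^4 + θ^6)
    (H : Matrix (Fin 3) (Fin 3) ℝ)
    (hH : H = (1/D) •
      !![(1 + θ^2)*(1 + θ^4), 4*θ^3, 2*θ^2*(1 + θ^2);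
         (1 + θ^2)^3/2, 4*θ^3, (1 + θ^2)^3/2;
         2*θ^2*(1 + θ^2), 4*θ^3, (1 + θ^2)*(1 + θ^4)]) :
    P * Q = H := by
  have hθ0 : θ ≠ 0 := hθ.ne'
  have hDpos : (0:ℝ) < D := by rw [hD]; positivity
  have hD0 : D ≠ 0 := hDpos.ne'
  have hX' : X = (1 + θ^2)^2 / (4*θ^2) := by rw [hX]; field_simp; ring
  subst hZ hY; subst hX'
  have hden1 : θ^2*((1 + θ^2)^2 / (4*θ^2)) + θ + (1 + θ^2)^2 / (4*θ^2) = D / (4*θ^2) := by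
    rw [hD]; field_simp; ring
  have hden2 : (1 + θ^2)^2 / (4*θ^2) + θ + θ^2*((1 + θ^2)^2 / (4*θ^2)) = D / (4*θ^2) := by
    rw [hD]; field_simp; ring
  have hd : D / (4*θ^2) ≠ 0 := by positivity
  rw [hP, hQ, hH, hden1, hden2]
  ext i j
  fin_cases i <;> fin_cases j <;>
    simp [Matrix.mul_apply, Fin.sum_univ_two, Matrix.smul_apply, smul_eq_mul,
          Matrix.cons_val_zero, Matrix.cons_val_one, Matrix.head_cons, Matrix.vecHead, Matrix.vecTail] <;>
    rw [hD] <;> field_simp <;> ring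
end

section
/- For every θ > 0, the matrix H is row-stochastic (all entries are nonnegative and each row sums to 1), and its eigenvalues are exactly 0, (θ² − 1)²(1 + θ²)/D, and 1. -/
/-!
Writing `D = (1 + θ²)³ + 4θ³`, every row of `D • H` sums to `D`, so `(1, 1, 1)` is fixed by `H`.
The first and third rows of `H` average to the second, so `H` is singular, and `(1, 0, -1)` is an
eigenvector with eigenvalue `(θ² - 1)²(1 + θ²)/D`. Hence the characteristic polynomial of `H` is
`μ (μ - 1) (μ - (θ² - 1)²(1 + θ²)/D)`.
-/

open Matrix Polynomial

namespace ThetaChain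

noncomputable section

def denom (θ : ℝ) : ℝ := 1 + 3*θ^2 + 4*θ^3 + 3*θ^4 + θ^6

def transition (θ : ℝ) : Matrix (Fin 3) (Fin 3) ℝ :=
  (1 / denom θ) •
    !![(1 + θ^2)*(1 + θ^4), 4*θ^3, 2*θ^2*(1 + θ^2);
       (1 + θ^2)^3/2, 4*θ^3, (1 + θ^2)^3/2;
       2*θ^2*(1 + θ^2), 4*θ^3, (1 + θ^2)*(1 + θ^4)]

end

variable (θ : ℝ)

-- `3θ² + 4θ + 3` has negative discriminant.
theorem one_le_denom : 1 ≤ denom θ := by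
  unfold denom
  nlinarith [sq_nonneg θ, sq_nonneg (θ^3), mul_nonneg (sq_nonneg θ) (sq_nonneg (3*θ + 2))]

theorem denom_ne_zero : denom θ ≠ 0 := (zero_lt_one.trans_le (one_le_denom θ)).ne'

theorem transition_nonneg {θ : ℝ} (hθ : 0 ≤ θ) (i j : Fin 3) : 0 ≤ transition θ i j := by
  have hD : 0 < denom θ := zero_lt_one.trans_le (one_le_denom θ)
  fin_cases i <;> fin_cases j <;>
    simp only [transition, Matrix.smul_apply, of_apply, cons_val', cons_val_zero, cons_val_one,
      cons_val, cons_val_fin_one, smul_eq_mul, Fin.zero_eta, Fin.mk_one, Fin.reduceFinMk] <;>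
    positivity

theorem sum_transition_row (i : Fin 3) : ∑ j, transition θ i j = 1 := by
  have hD := denom_ne_zero θ
  fin_cases i <;>
    simp only [transition, Matrix.smul_apply, of_apply, cons_val', cons_val_zero, cons_val_one,
      cons_val, cons_val_fin_one, smul_eq_mul, Fin.zero_eta, Fin.mk_one, Fin.reduceFinMk,
      Fin.sum_univ_three] <;>
    field_simp <;> rw [denom] <;> ring

theorem det_scalar_sub_transition (μ : ℝ) :
    (scalar (Fin 3) μ - transition θ).det
      = μ * (μ - 1) * (μ - (θ^2 - 1)^2*(1 + θ^2)/denom θ) := by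
  have hD := denom_ne_zero θ
  simp only [det_fin_three, transition, Matrix.sub_apply, scalar_apply, Matrix.smul_apply, of_apply,
    cons_val', cons_val_zero, cons_val_one, cons_val, cons_val_fin_one, smul_eq_mul, Fin.isValue,
    diagonal_apply_eq, diagonal_apply_ne, ne_eq, Fin.reduceEq, not_false_eq_true]
  field_simp
  rw [denom]
  ring

theorem spectrum_transition :
    spectrum ℝ (transition θ) = {0, (θ^2 - 1)^2*(1 + θ^2)/denom θ, 1} := by
  ext μ
  rw [mem_spectrum_iff_isRoot_charpoly, IsRoot.def, eval_charpoly, det_scalar_sub_transition]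
  simp only [mul_eq_zero, sub_eq_zero, Set.mem_insert_iff, Set.mem_singleton_iff]
  tauto

end ThetaChain

/-- for every θ > 0 the matrix H is row-stochastic and its eigenvalues
are exactly 0, (θ² − 1)²(1 + θ²)/D and 1. -/
theorem stmt_14 (θ : ℝ) (hθ : 0 < θ)
    (D : ℝ) (hD : D = 1 + 3*θ^2 + 4*θ^3 + 3*θ^4 + θ^6)
    (H : Matrix (Fin 3) (Fin 3) ℝ)
    (hH : H = (1/D) •
      !![(1 + θ^2)*(1 + θ^4), 4*θ^3, 2*θ^2*(1 + θ^2);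
         (1 + θ^2)^3/2, 4*θ^3, (1 + θ^2)^3/2;
         2*θ^2*(1 + θ^2), 4*θ^3, (1 + θ^2)*(1 + θ^4)]) :
    (∀ i j, 0 ≤ H i j) ∧ (∀ i, ∑ j, H i j = 1) ∧
    spectrum ℝ H = {0, (θ^2 - 1)^2*(1 + θ^2)/D, 1} := by
  subst hD hH
  exact ⟨ThetaChain.transition_nonneg hθ.le, ThetaChain.sum_transition_row θ,
    ThetaChain.spectrum_transition θ⟩
end

section
/- For every θ > 0, κ := (1/2)·max over pairs of rows i, j of H of Σ_{l=1}^{3} |H_{i,l} − H_{j,l}| equals (1 + θ²)(θ² − 1)²/D. -/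
set_option maxHeartbeats 1000000 in
/-- the maximal (halved ℓ¹) distance between rows of H, i.e.
κ = (1/2)·max_{i,j} Σ_l |H_{i,l} − H_{j,l}|, equals (1 + θ²)(θ² − 1)²/D. -/
theorem stmt_15 (θ : ℝ) (hθ : 0 < θ)
    (D : ℝ) (hD : D = 1 + 3*θ^2 + 4*θ^3 + 3*θ^4 + θ^6)
    (H : Matrix (Fin 3) (Fin 3) ℝ)
    (hH : H = (1/D) •
      !![(1 + θ^2)*(1 + θ^4), 4*θ^3, 2*θ^2*(1 + θ^2);
         (1 + θ^2)^3/2, 4*θ^3, (1 + θ^2)^3/2;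
         2*θ^2*(1 + θ^2), 4*θ^3, (1 + θ^2)*(1 + θ^4)]) :
    IsGreatest
      (Set.range fun p : Fin 3 × Fin 3 => (1/2) * ∑ l, |H p.1 l - H p.2 l|)
      ((1 + θ^2)*(θ^2 - 1)^2/D) := by
  have hD0 : 0 < D := by
    rw [hD]; nlinarith [pow_pos hθ 2, pow_pos hθ 3, pow_pos hθ 4, pow_pos hθ 6]
  have hDinv : (0:ℝ) < D⁻¹ := inv_pos.mpr hD0
  have hX0 : (0:ℝ) ≤ (1 + θ^2)*(θ^2 - 1)^2 := by positivity
  have h1 : |(1 + θ^2)*(1 + θ^4) - 2*θ^2*(1 + θ^2)| = (1 + θ^2)*(θ^2 - 1)^2 := by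
    rw [abs_of_nonneg (by nlinarith)]; ring
  have h2 : |2*θ^2*(1 + θ^2) - (1 + θ^2)*(1 + θ^4)| = (1 + θ^2)*(θ^2 - 1)^2 := by
    rw [abs_of_nonpos (by nlinarith)]; ring
  have h3 : |(1 + θ^2)*(1 + θ^4) - (1 + θ^2)^3/2| = (1 + θ^2)*(θ^2 - 1)^2/2 := by
    rw [abs_of_nonneg (by nlinarith)]; ring
  have h4 : |(1 + θ^2)^3/2 - (1 + θ^2)*(1 + θ^4)| = (1 + θ^2)*(θ^2 - 1)^2/2 := by
    rw [abs_of_nonpos (by nlinarith)]; ring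
  have h5 : |2*θ^2*(1 + θ^2) - (1 + θ^2)^3/2| = (1 + θ^2)*(θ^2 - 1)^2/2 := by
    rw [abs_of_nonpos (by nlinarith)]; ring
  have h6 : |(1 + θ^2)^3/2 - 2*θ^2*(1 + θ^2)| = (1 + θ^2)*(θ^2 - 1)^2/2 := by
    rw [abs_of_nonneg (by nlinarith)]; ring
  subst hH
  constructor
  · refine ⟨(0, 2), ?_⟩
    simp only [Fin.sum_univ_three, Matrix.smul_apply, smul_eq_mul]
    norm_num [Matrix.cons_val_zero, Matrix.cons_val_one, Matrix.head_cons,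
      Matrix.cons_val_two, Matrix.tail_cons, Matrix.vecHead, Matrix.vecTail, ← mul_sub, abs_mul,
      abs_of_pos hDinv, h1, h2]
    rw [div_eq_mul_inv]; ring
  · rintro x ⟨⟨i, j⟩, rfl⟩
    fin_cases i <;> fin_cases j <;>
      · simp only [Fin.sum_univ_three, Matrix.smul_apply, smul_eq_mul]
        norm_num [Matrix.cons_val_zero, Matrix.cons_val_one, Matrix.head_cons,
          Matrix.cons_val_two, Matrix.tail_cons, Matrix.vecHead, Matrix.vecTail, ← mul_sub, abs_mul,
          abs_of_pos hDinv, h1, h2, h3, h4, h5, h6]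
        first
          | exact div_nonneg hX0 hD0.le
          | (rw [div_eq_mul_inv ((1+θ^2)*(θ^2-1)^2) D]; nlinarith [mul_nonneg hX0 hDinv.le])
end
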